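/- Let z_1, z_2, z_3 be i.i.d. rate-1 exponential random variables, λ > 0, and r_1, r_2, r_3 ≥ 0. Let R_3 = r_1 + r_2 + r_3 and α_3 = (2^{r_1}−1)(2^{r_2}−1)(2^{r_3}−1). Then the probability that all seven MAC inequalities hold, namely Σ_{i∈M} z_i ≥ λ(2^{Σ_{i∈M} r_i} − 1) for every nonempty M ⊆ {1,2,3}, is at least e^{-λ(2^{R_3}−1)} · (1 + λα_3 + (λα_3)^2/2). -/

import Mathlib

/-!
Write `aᵢ = 2^{rᵢ} - 1`, so that the constraint of a coalition `M` reads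
`∑_{i ∈ M} zᵢ ≥ λ (∏_{i ∈ M} (1 + aᵢ) - 1) = λ ∑_{∅ ≠ S ⊆ M} ∏_{j ∈ S} aⱼ`.
Split every term `∏_{j ∈ S} aⱼ` with `S` a proper subset evenly among the members of `S`; this
gives each user a share `cᵢ` (`macShare`), and every proper coalition collects all of its own
terms. Hence the event `{zᵢ ≥ λ cᵢ for all i, ∑ zᵢ ≥ λ (2^R - 1)}` lies in the non-outage region.
By memorylessness, shifting each `zᵢ` by `λ cᵢ` turns its probability into `e^{-λ ∑ cᵢ}` times
the probability that a sum of `n` i.i.d. `Exp(1)` variables exceeds the leftover term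
`λ ∏ aᵢ = λ α`, which is the Erlang tail `e^{-λα} ∑_{k < n} (λα)^k / k!`.
-/

open MeasureTheory ProbabilityTheory Real

/-- The product measure of `n` i.i.d. rate-1 exponential random variables. -/
noncomputable def iidExp (ι : Type*) [Fintype ι] : Measure (ι → ℝ) :=
  haveI : IsProbabilityMeasure (expMeasure 1) := isProbabilityMeasure_expMeasure one_pos
  Measure.pi fun _ => expMeasure 1

open scoped ENNReal Nat

instance : IsProbabilityMeasure (expMeasure 1) := isProbabilityMeasure_expMeasure one_pos

instance (ι : Type*) [Fintype ι] : IsProbabilityMeasure (iidExp ι) := by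
  unfold iidExp
  infer_instance

section Exponential

open Set

lemma lintegral_expMeasure_one {g : ℝ → ℝ≥0∞} (hg : Measurable g) :
    ∫⁻ y, g y ∂expMeasure 1 = ∫⁻ y in Ici 0, ENNReal.ofReal (exp (-y)) * g y := by
  have hpdf : Measurable (gammaPDF 1 1) := (measurable_gammaPDFReal 1 1).ennreal_ofReal
  rw [expMeasure, gammaMeasure, lintegral_withDensity_eq_lintegral_mul _ hpdf hg,
    ← lintegral_indicator measurableSet_Ici]
  refine lintegral_congr fun y => ?_
  rcases lt_or_ge y 0 with hy | hy
  · simp [gammaPDF_of_neg hy, indicator_of_notMem (notMem_Ici.2 hy)]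
  · simp [gammaPDF_of_nonneg hy, indicator_of_mem (mem_Ici.2 hy)]

lemma lintegral_Ici_expMeasure_one {c : ℝ} (hc : 0 ≤ c) {g : ℝ → ℝ≥0∞} (hg : Measurable g) :
    ∫⁻ y in Ici c, g y ∂expMeasure 1
      = ENNReal.ofReal (exp (-c)) * ∫⁻ w, g (c + w) ∂expMeasure 1 := by
  set F : ℝ → ℝ≥0∞ := fun y => ENNReal.ofReal (exp (-y)) * g y
  have hshift : ∀ w, (Ici 0).indicator (fun w => F (c + w)) w = (Ici c).indicator F (c + w) := by
    intro w
    by_cases hw : 0 ≤ w <;> simp [hw]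
  have hexp : ∀ w, ENNReal.ofReal (exp (-c)) * (ENNReal.ofReal (exp (-w)) * g (c + w))
      = F (c + w) := by
    intro w
    rw [← mul_assoc, ← ENNReal.ofReal_mul (exp_pos _).le, ← exp_add, ← neg_add]
  calc ∫⁻ y in Ici c, g y ∂expMeasure 1
      = ∫⁻ y, (Ici c).indicator F y := by
        rw [← lintegral_indicator measurableSet_Ici,
          lintegral_expMeasure_one (hg.indicator measurableSet_Ici)]
        simp_rw [← indicator_mul_right (Ici c) (fun y => ENNReal.ofReal (exp (-y))) g]
        rw [setLIntegral_indicator measurableSet_Ici, inter_eq_left.2 (Ici_subset_Ici.2 hc),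
          lintegral_indicator measurableSet_Ici]
    _ = ∫⁻ w, (Ici 0).indicator (fun w => F (c + w)) w := by
        simp_rw [hshift]
        exact (lintegral_add_left_eq_self _ c).symm
    _ = ENNReal.ofReal (exp (-c)) * ∫⁻ w, g (c + w) ∂expMeasure 1 := by
        rw [lintegral_indicator measurableSet_Ici,
          lintegral_expMeasure_one (g := fun w => g (c + w)) (by fun_prop),
          ← lintegral_const_mul' _ _ ENNReal.ofReal_ne_top]
        simp_rw [hexp]

lemma expMeasure_one_Ici {c : ℝ} (hc : 0 ≤ c) :
    expMeasure 1 (Ici c) = ENNReal.ofReal (exp (-c)) := by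
  simpa using lintegral_Ici_expMeasure_one hc (g := fun _ => 1) measurable_const

lemma iidExp_fin_succ_apply {n : ℕ} {S : Set (Fin (n + 1) → ℝ)} (hS : MeasurableSet S) :
    iidExp (Fin (n + 1)) S = ∫⁻ y, iidExp (Fin n) {w | Fin.cons y w ∈ S} ∂expMeasure 1 := by
  have h := (measurePreserving_piFinSuccAbove (fun _ : Fin (n + 1) => expMeasure 1) 0).symm
  rw [iidExp, ← h.measure_preimage hS.nullMeasurableSet,
    Measure.prod_apply (hS.preimage h.measurable)]
  refine lintegral_congr fun y => ?_
  congr 1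
  ext w
  simp only [mem_preimage, MeasurableEquiv.piFinSuccAbove_symm_apply, Fin.insertNthEquiv,
    Equiv.coe_fn_mk, Fin.insertNth_zero', mem_ofPred_eq]

end Exponential

section Erlang

open Set

lemma integral_sum_range_pow_div_factorial (n : ℕ) (t : ℝ) :
    ∫ y in (0)..t, ∑ k ∈ Finset.range n, y ^ k / k ! =
      ∑ k ∈ Finset.range n, t ^ (k + 1) / (k + 1)! := by
  rw [intervalIntegral.integral_finsetSum fun k _ =>
    ((continuous_pow k).intervalIntegrable _ _).div_const _]
  refine Finset.sum_congr rfl fun k _ => ?_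
  rw [intervalIntegral.integral_div, integral_pow, Nat.factorial_succ, Nat.cast_mul]
  field_simp
  push_cast
  ring

noncomputable def erlangTail (n : ℕ) (t : ℝ) : ℝ :=
  if t ≤ 0 then 1 else exp (-t) * ∑ k ∈ Finset.range n, t ^ k / k !

@[fun_prop]
lemma measurable_erlangTail (n : ℕ) : Measurable (erlangTail n) :=
  Measurable.ite measurableSet_Iic measurable_const (by fun_prop)

lemma erlangTail_of_nonneg {n : ℕ} (hn : n ≠ 0) {t : ℝ} (ht : 0 ≤ t) :
    erlangTail n t = exp (-t) * ∑ k ∈ Finset.range n, t ^ k / k ! := by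
  unfold erlangTail
  split_ifs with h
  · obtain rfl : t = 0 := le_antisymm h ht
    obtain ⟨m, rfl⟩ := Nat.exists_eq_succ_of_ne_zero hn
    simp [Finset.sum_range_succ']
  · rfl

lemma setLIntegral_Iio_erlangTail_sub (n : ℕ) {t : ℝ} (ht : 0 < t) :
    ∫⁻ y in Iio t, ENNReal.ofReal (erlangTail n (t - y)) ∂expMeasure 1
      = ENNReal.ofReal (exp (-t) * ∑ k ∈ Finset.range n, t ^ (k + 1) / (k + 1)!) := by
  set P : ℝ → ℝ := fun s => ∑ k ∈ Finset.range n, s ^ k / (k ! : ℝ)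
  have hm : Measurable fun y => ENNReal.ofReal (erlangTail n (t - y)) := by fun_prop
  have hdensity : ∀ y ∈ Ico 0 t,
      ENNReal.ofReal (exp (-y)) * ENNReal.ofReal (erlangTail n (t - y))
        = ENNReal.ofReal (exp (-t) * P (t - y)) := fun y hy => by
    rw [erlangTail, if_neg (by linarith [hy.2]), ← ENNReal.ofReal_mul (exp_pos _).le, ← mul_assoc,
      ← exp_add, show -y + -(t - y) = -t by ring]
  have hint : IntegrableOn (fun y => exp (-t) * P (t - y)) (Ico 0 t) :=
    (Continuous.integrableOn_Icc (by fun_prop)).mono_set Ico_subset_Icc_self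
  have hpos : ∀ y ∈ Ico 0 t, 0 ≤ exp (-t) * P (t - y) := fun y hy =>
    mul_nonneg (exp_pos _).le (Finset.sum_nonneg fun k _ =>
      div_nonneg (pow_nonneg (sub_nonneg.2 hy.2.le) k) (Nat.cast_nonneg _))
  rw [← lintegral_indicator measurableSet_Iio,
    lintegral_expMeasure_one (hm.indicator measurableSet_Iio)]
  simp_rw [← indicator_mul_right (Iio t) (fun y => ENNReal.ofReal (exp (-y)))]
  rw [setLIntegral_indicator measurableSet_Iio, inter_comm, Ici_inter_Iio,
    setLIntegral_congr_fun measurableSet_Ico hdensity,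
    ← ofReal_integral_eq_lintegral_ofReal hint (ae_restrict_of_forall_mem measurableSet_Ico hpos),
    integral_Ico_eq_integral_Ioo, ← integral_Ioc_eq_integral_Ioo,
    ← intervalIntegral.integral_of_le ht.le, intervalIntegral.integral_const_mul,
    intervalIntegral.integral_comp_sub_left P, sub_self, sub_zero,
    integral_sum_range_pow_div_factorial]

lemma lintegral_erlangTail_sub (n : ℕ) (t : ℝ) :
    ∫⁻ y, ENNReal.ofReal (erlangTail n (t - y)) ∂expMeasure 1 =
      ENNReal.ofReal (erlangTail (n + 1) t) := by
  have hm : Measurable fun y => ENNReal.ofReal (erlangTail n (t - y)) := by fun_prop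
  rcases le_or_gt t 0 with ht | ht
  · have hone : ∀ y ∈ Ici (0 : ℝ),
        ENNReal.ofReal (exp (-y)) * ENNReal.ofReal (erlangTail n (t - y))
          = ENNReal.ofReal (exp (-y)) * 1 := fun y hy => by
      rw [erlangTail, if_pos (by linarith [mem_Ici.1 hy]), ENNReal.ofReal_one]
    rw [lintegral_expMeasure_one hm, setLIntegral_congr_fun measurableSet_Ici hone,
      ← lintegral_expMeasure_one measurable_const, erlangTail, if_pos ht]
    simp
  have hfar : ∫⁻ y in Ici t, ENNReal.ofReal (erlangTail n (t - y)) ∂expMeasure 1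
      = ENNReal.ofReal (exp (-t)) := by
    rw [setLIntegral_congr_fun measurableSet_Ici fun y (hy : t ≤ y) => by
        rw [erlangTail, if_pos (by linarith), ENNReal.ofReal_one],
      setLIntegral_const, one_mul, expMeasure_one_Ici ht.le]
  rw [← lintegral_add_compl _ (measurableSet_Ici (a := t)), compl_Ici, hfar,
    setLIntegral_Iio_erlangTail_sub n ht, ← ENNReal.ofReal_add (exp_pos _).le (by positivity),
    erlangTail, if_neg ht.not_ge, Finset.sum_range_succ']
  congr 1
  simp only [pow_zero, Nat.factorial_zero, Nat.cast_one, div_one]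
  ring

lemma iidExp_box_inter_sum_ge {n : ℕ} {c : Fin n → ℝ} (hc : ∀ i, 0 ≤ c i) (t : ℝ) :
    iidExp (Fin n) {z | (∀ i, c i ≤ z i) ∧ t ≤ ∑ i, z i}
      = ENNReal.ofReal (exp (-∑ i, c i) * erlangTail n (t - ∑ i, c i)) := by
  induction n generalizing t with
  | zero =>
    by_cases ht : t ≤ 0 <;> simp [erlangTail, ht]
  | succ n ih =>
    set S := {z : Fin (n + 1) → ℝ | (∀ i, c i ≤ z i) ∧ t ≤ ∑ i, z i}
    have hS : MeasurableSet S := by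
      measurability
    have hslice : ∀ y, iidExp (Fin n) {w | Fin.cons y w ∈ S}
        = (Ici (c 0)).indicator (fun y => ENNReal.ofReal
            (exp (-∑ i, Fin.tail c i) * erlangTail n (t - y - ∑ i, Fin.tail c i))) y := by
      intro y
      by_cases hy : c 0 ≤ y
      · have hset : {w | Fin.cons y w ∈ S}
            = {w | (∀ i, Fin.tail c i ≤ w i) ∧ t - y ≤ ∑ i, w i} := by
          ext w
          simp [S, Fin.forall_fin_succ, Fin.sum_cons, hy, Fin.tail, add_comm]
        rw [hset, ih (c := Fin.tail c) (fun i => hc i.succ), indicator_of_mem (mem_Ici.2 hy)]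
      · simp [S, Fin.forall_fin_succ, hy]
    have hshift : ∀ w, t - (c 0 + w) - ∑ i, Fin.tail c i = (t - c 0 - ∑ i, Fin.tail c i) - w :=
      fun w => by ring
    rw [iidExp_fin_succ_apply hS]
    simp_rw [hslice]
    rw [lintegral_indicator measurableSet_Ici, lintegral_Ici_expMeasure_one (hc 0) (by fun_prop)]
    simp_rw [hshift, ENNReal.ofReal_mul (exp_pos _).le]
    rw [lintegral_const_mul _ (by fun_prop), lintegral_erlangTail_sub, ← mul_assoc,
      ← ENNReal.ofReal_mul (exp_pos _).le, ← exp_add, Fin.sum_univ_succ c, neg_add,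
      sub_add_eq_sub_sub]
    rfl

end Erlang

section Shares

open Finset

variable {ι : Type*} [DecidableEq ι]

lemma card_inter_mul_div_card {M S : Finset ι} (hS : S ⊆ M) (hS₀ : S ≠ ∅) (x : ℝ) :
    #(M ∩ S) * (x / #S) = x := by
  rw [inter_eq_right.2 hS]
  have : (#S : ℝ) ≠ 0 := by simpa [card_eq_zero] using hS₀
  field_simp

lemma sum_powerset_erase_empty_prod (a : ι → ℝ) (M : Finset ι) :
    ∑ S ∈ M.powerset.erase ∅, ∏ j ∈ S, a j = ∏ i ∈ M, (1 + a i) - 1 := by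
  rw [prod_one_add, ← sum_erase_add _ _ (empty_mem_powerset M), prod_empty, add_sub_cancel_right]

variable [Fintype ι]

noncomputable def macShare (a : ι → ℝ) (i : ι) : ℝ :=
  ∑ S ∈ (univ.powerset.erase univ).filter (i ∈ ·), (∏ j ∈ S, a j) / #S

lemma macShare_nonneg {a : ι → ℝ} (ha : ∀ i, 0 ≤ a i) (i : ι) : 0 ≤ macShare a i :=
  sum_nonneg fun _ _ => div_nonneg (prod_nonneg fun j _ => ha j) (Nat.cast_nonneg _)

lemma sum_macShare (a : ι → ℝ) (M : Finset ι) :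
    ∑ i ∈ M, macShare a i
      = ∑ S ∈ univ.powerset.erase univ, #(M ∩ S) * ((∏ j ∈ S, a j) / #S) := by
  simp_rw [macShare, sum_filter]
  rw [sum_comm]
  refine sum_congr rfl fun S _ => ?_
  rw [sum_ite_mem, sum_const, nsmul_eq_mul]

lemma prod_one_add_sub_one_le_sum_macShare {a : ι → ℝ} (ha : ∀ i, 0 ≤ a i) {M : Finset ι}
    (hM : M ≠ univ) : ∏ i ∈ M, (1 + a i) - 1 ≤ ∑ i ∈ M, macShare a i := by
  have hsub : M.powerset.erase ∅ ⊆ univ.powerset.erase univ := fun S hS => by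
    have hSM := mem_powerset.1 (mem_of_mem_erase hS)
    exact mem_erase.2 ⟨fun h => hM (univ_subset_iff.1 (h ▸ hSM)), mem_powerset.2 (subset_univ S)⟩
  rw [sum_macShare, ← sum_powerset_erase_empty_prod]
  calc ∑ S ∈ M.powerset.erase ∅, ∏ j ∈ S, a j
      = ∑ S ∈ M.powerset.erase ∅, #(M ∩ S) * ((∏ j ∈ S, a j) / #S) :=
        sum_congr rfl fun S hS => (card_inter_mul_div_card
          (mem_powerset.1 (mem_of_mem_erase hS)) (ne_of_mem_erase hS) _).symm
    _ ≤ _ := sum_le_sum_of_subset_of_nonneg hsub fun S _ _ => mul_nonneg (Nat.cast_nonneg _)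
        (div_nonneg (prod_nonneg fun j _ => ha j) (Nat.cast_nonneg _))

lemma sum_macShare_univ [Nonempty ι] (a : ι → ℝ) :
    ∑ i, macShare a i = ∏ i, (1 + a i) - 1 - ∏ i, a i := by
  have huniv : univ ∈ (univ : Finset ι).powerset.erase ∅ :=
    mem_erase.2 ⟨univ_nonempty.ne_empty, mem_powerset_self _⟩
  rw [sum_macShare, ← sum_erase _ (a := ∅) (by simp), erase_right_comm,
    sum_congr rfl fun S hS =>
      card_inter_mul_div_card (subset_univ S) (ne_of_mem_erase (mem_of_mem_erase hS)) _,
    sum_erase_eq_sub huniv, sum_powerset_erase_empty_prod]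

lemma le_sum_of_macShare_le {lam : ℝ} (hlam : 0 ≤ lam) {a : ι → ℝ} (ha : ∀ i, 0 ≤ a i)
    {z : ι → ℝ} (hz : ∀ i, lam * macShare a i ≤ z i)
    (hsum : lam * (∏ i, (1 + a i) - 1) ≤ ∑ i, z i) (M : Finset ι) :
    lam * (∏ i ∈ M, (1 + a i) - 1) ≤ ∑ i ∈ M, z i := by
  by_cases hM : M = univ
  · subst hM
    exact hsum
  calc lam * (∏ i ∈ M, (1 + a i) - 1)
      ≤ lam * ∑ i ∈ M, macShare a i :=
        mul_le_mul_of_nonneg_left (prod_one_add_sub_one_le_sum_macShare ha hM) hlam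
    _ = ∑ i ∈ M, lam * macShare a i := mul_sum _ _ _
    _ ≤ ∑ i ∈ M, z i := sum_le_sum fun i _ => hz i

end Shares

theorem le_iidExp_macNonoutage {n : ℕ} [NeZero n] {lam : ℝ} (hlam : 0 ≤ lam) {r : Fin n → ℝ}
    (hr : ∀ i, 0 ≤ r i) :
    ENNReal.ofReal (exp (-(lam * ((2 : ℝ) ^ (∑ i, r i) - 1)))
        * ∑ k ∈ Finset.range n, (lam * ∏ i, ((2 : ℝ) ^ r i - 1)) ^ k / k !)
      ≤ iidExp (Fin n) {z | ∀ M : Finset (Fin n), M.Nonempty →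
          lam * ((2 : ℝ) ^ (∑ i ∈ M, r i) - 1) ≤ ∑ i ∈ M, z i} := by
  set a : Fin n → ℝ := fun i => (2 : ℝ) ^ r i - 1
  have ha : ∀ i, 0 ≤ a i := fun i => sub_nonneg.2 (one_le_rpow one_le_two (hr i))
  have hpow : ∀ M : Finset (Fin n), (2 : ℝ) ^ (∑ i ∈ M, r i) = ∏ i ∈ M, (1 + a i) := fun M => by
    simp [a, rpow_sum_of_pos two_pos]
  set c : Fin n → ℝ := fun i => lam * macShare a i
  set x := lam * ∏ i, a i
  have hx : 0 ≤ x := mul_nonneg hlam (Finset.prod_nonneg fun i _ => ha i)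
  have hc : ∑ i, c i = lam * (∏ i, (1 + a i) - 1) - x := by
    rw [← Finset.mul_sum, sum_macShare_univ]
    ring
  calc _ = iidExp (Fin n) {z | (∀ i, c i ≤ z i) ∧ lam * (∏ i, (1 + a i) - 1) ≤ ∑ i, z i} := by
        rw [iidExp_box_inter_sum_ge (fun i => mul_nonneg hlam (macShare_nonneg ha i)), hc,
          sub_sub_cancel, erlangTail_of_nonneg (NeZero.ne n) hx, ← mul_assoc, ← exp_add, hpow]
        congr 3
        ring
    _ ≤ _ := by
        refine measure_mono fun z ⟨hz, hsum⟩ => ?_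
        intro M _
        rw [hpow]
        exact le_sum_of_macShare_le hlam ha hz hsum M

/-- Lower bound on the non-outage probability of a 3-link i.i.d. Rayleigh MAC:
$P(\text{all seven MAC inequalities}) \ge e^{-\lambda(2^{R_3}-1)} G(\lambda\alpha_3)$
with $G(x) = x^2/2 + x + 1$. -/
theorem mac3_nonoutage_lower (lam : ℝ) (hlam : 0 < lam) (r : Fin 3 → ℝ) (hr : ∀ i, 0 ≤ r i) :
    ENNReal.ofReal (Real.exp (-(lam * ((2 : ℝ) ^ (∑ i, r i) - 1)))
        * (1 + lam * ∏ i, ((2 : ℝ) ^ r i - 1)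
            + (lam * ∏ i, ((2 : ℝ) ^ r i - 1)) ^ 2 / 2))
      ≤ iidExp (Fin 3) {z | ∀ M : Finset (Fin 3), M.Nonempty →
          lam * ((2 : ℝ) ^ (∑ i ∈ M, r i) - 1) ≤ ∑ i ∈ M, z i} := by
  convert le_iidExp_macNonoutage hlam.le hr using 4
  simp [Finset.sum_range_succ]
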